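/- arXiv:2509.08324 — 2 statements merged into one kernel-verified Lean document; each statement's English description precedes it below -/
import Mathlib

section
/- Let c2, c4 > 0, p ∈ (0,1), p_d > 1, ν_d > 0, and t̄0 ≥ 0. Let D ⊆ [t̄0,∞) be a union of countably many pairwise disjoint intervals [t_k^a, t_k), and suppose the total length of D ∩ [t̄0, t] is at most (t − t̄0)/p_d + ν_d for every t ≥ t̄0. Let y : [t̄0,∞) → ℝ be continuous and nonnegative with y(t̄0) ≤ 1, differentiable at every t except possibly at the endpoints t_k^a, t_k, and suppose that at every point of differentiability, y′(t) ≤ −c2·y(t)^p if t ∉ D, and y′(t) ≤ c4·y(t) if t ∈ D. Then: (i) for every t ≥ t̄0 such that y(s) > 0 for all s ∈ [t̄0, t], one has y(t)^{1−p} ≤ exp(c4(1−p)·((t − t̄0)/p_d + ν_d)) − c2(1−p)·(t − t̄0 − (t − t̄0)/p_d − ν_d); (ii) consequently, if for some t̃ ≥ t̄0 the right-hand side of (i) is ≤ 0 at t̃, then y(t) = 0 for all t ≥ t̃. -/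
open MeasureTheory Set Filter Topology Real

/-!
Let `m(t)` be the time spent in `D` up to `t` and `W = y ^ (1 - p)`. Inside `D` the bound
`y' ≤ c4 y` gives `W' ≤ K W` with `K = c4 (1 - p)`; outside `D` the bound `y' ≤ -c2 y ^ p` gives
`W' ≤ -C` with `C = c2 (1 - p)`. Hence the switched Lyapunov function
`(W(t) + C (t - t0 - m(t))) e^{-K m(t)}` has nonpositive right Dini derivatives away from the
countably many switching instants, so it is nonincreasing: `W(t) ≤ e^{K m(t)} - C (t - t0 - m(t))`,
and the duration bound on `m` gives (i). For (ii), (i) forces `y` to vanish somewhere in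
`[t0, t̃]`; since `y' ≤ c4 y` in both modes, `y e^{-c4 t}` is nonincreasing, so `y` stays zero.
-/

lemma exists_eq_forall_lt_of_continuousOn {g : ℝ → ℝ} {a b y : ℝ} (hab : a ≤ b)
    (hg : ContinuousOn g (Icc a b)) (ha : g a ≤ y) (hb : y < g b) :
    ∃ x ∈ Ico a b, g x = y ∧ ∀ z ∈ Ioc x b, y < g z := by
  set S := Icc a b ∩ g ⁻¹' Iic y
  have hS : IsClosed S := hg.preimage_isClosed_of_isClosed isClosed_Icc isClosed_Iic
  have hSbdd : BddAbove S := bddAbove_Icc.mono inter_subset_left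
  have hcS : sSup S ∈ S := hS.csSup_mem ⟨a, ⟨le_rfl, hab⟩, ha⟩ hSbdd
  set c := sSup S
  have hgt : ∀ z ∈ Ioc c b, y < g z := fun z hz =>
    not_le.1 fun h => hz.1.not_ge (le_csSup hSbdd ⟨⟨hcS.1.1.trans hz.1.le, hz.2⟩, h⟩)
  obtain ⟨x, hx, hgx⟩ := intermediate_value_Icc hcS.1.2
    (hg.mono (Icc_subset_Icc_left hcS.1.1)) ⟨hcS.2, hb.le⟩
  have hxc : x = c :=
    le_antisymm (le_csSup hSbdd ⟨⟨hcS.1.1.trans hx.1, hx.2⟩, hgx.le⟩) hx.1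
  rw [hxc] at hgx
  exact ⟨c, ⟨hcS.1.1, lt_of_le_of_ne hcS.1.2 fun h => hb.ne (h ▸ hgx).symm⟩, hgx, hgt⟩

theorem image_le_of_frequently_slope_lt_off_countable {f : ℝ → ℝ} {a b : ℝ} {s : Set ℝ}
    (hs : s.Countable) (hab : a ≤ b) (hf : ContinuousOn f (Icc a b))
    (hf' : ∀ x ∈ Ico a b \ s, ∀ r > 0, ∃ᶠ z in 𝓝[>] x, slope f x z < r) : f b ≤ f a := by
  by_contra! hlt
  set ε := (f b - f a) / (b - a + 1)
  have hε : 0 < ε := div_pos (sub_pos.2 hlt) (by linarith)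
  have hεab : ε * (b - a) < f b - f a := by
    calc ε * (b - a) < ε * (b - a + 1) := by linarith
      _ = f b - f a := div_mul_cancel₀ _ (by linarith)
  set g := fun x => f x - ε * x
  have hg : ContinuousOn g (Icc a b) := by fun_prop
  -- right after the last crossing of a level of `g`, the slopes of `f` exceed `ε`, so by `hf'`
  -- that crossing point lies in `s`; but there are uncountably many levels
  have hlevels : Ioo (g a) (g b) ⊆ g '' s := by
    intro y hy
    obtain ⟨x, hx, hgx, hgt⟩ := exists_eq_forall_lt_of_continuousOn hab hg hy.1.le hy.2
    refine ⟨x, by_contra fun hxs => ?_, hgx⟩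
    have hslope : ∀ᶠ z in 𝓝[>] x, ε < slope f x z := by
      filter_upwards [Ioc_mem_nhdsGT hx.2] with z hz
      have := hgt z hz
      rw [slope_def_field, lt_div_iff₀ (sub_pos.2 hz.1)]
      simp only [g] at this hgx
      linarith
    obtain ⟨z, hz, hz'⟩ := ((hf' x ⟨hx, hxs⟩ ε hε).and_eventually hslope).exists
    exact hz.not_gt hz'
  have := (hs.image g).mono hlevels
  rw [Cardinal.Real.Ioo_countable_iff] at this
  simp only [g] at this
  linarith

lemma HasDerivAt.eventually_slope_lt_of_le {f G : ℝ → ℝ} {x G' : ℝ} (hG : HasDerivAt G G' x)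
    (hG' : G' ≤ 0) (hx : f x = G x) (hle : ∀ᶠ z in 𝓝[>] x, f z ≤ G z) :
    ∀ r > 0, ∀ᶠ z in 𝓝[>] x, slope f x z < r := by
  intro r hr
  filter_upwards [hG.hasDerivWithinAt.limsup_slope_le' (lt_irrefl x) (hG'.trans_lt hr), hle,
    self_mem_nhdsWithin] with z hGz hz hxz
  refine lt_of_le_of_lt ?_ hGz
  rw [slope_def_field, slope_def_field, hx]
  exact div_le_div_of_nonneg_right (by linarith) (sub_pos.2 hxz).le

noncomputable def occupationTime (D : Set ℝ) (t0 t : ℝ) : ℝ := volume.real (D ∩ Icc t0 t)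

section OccupationTime

variable {D : Set ℝ} {t0 t s : ℝ}

lemma volume_inter_Icc_ne_top (D : Set ℝ) (t0 t : ℝ) : volume (D ∩ Icc t0 t) ≠ ⊤ :=
  measure_ne_top_of_subset inter_subset_right measure_Icc_lt_top.ne

@[simp] lemma occupationTime_self : occupationTime D t0 t0 = 0 := by
  rw [occupationTime, Icc_self, measureReal_def,
    measure_mono_null inter_subset_right Real.volume_singleton, ENNReal.toReal_zero]

lemma occupationTime_mono : Monotone (occupationTime D t0) := fun _ _ h =>
  measureReal_mono (inter_subset_inter_right _ (Icc_subset_Icc_right h))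
    (volume_inter_Icc_ne_top _ _ _)

lemma occupationTime_sub_le (hts : t ≤ s) :
    occupationTime D t0 s - occupationTime D t0 t ≤ s - t := by
  have hsub : D ∩ Icc t0 s ⊆ (D ∩ Icc t0 t) ∪ Ioc t s := by
    rintro u ⟨huD, hu0, hus⟩
    rcases le_or_gt u t with h | h
    · exact Or.inl ⟨huD, hu0, h⟩
    · exact Or.inr ⟨h, hus⟩
  have := (measureReal_mono hsub (measure_union_ne_top (volume_inter_Icc_ne_top _ _ _)
    measure_Ioc_lt_top.ne)).trans (measureReal_union_le _ _)
  rw [Real.volume_real_Ioc_of_le hts] at this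
  unfold occupationTime
  linarith

lemma occupationTime_le_sub (ht : t0 ≤ t) : occupationTime D t0 t ≤ t - t0 := by
  simpa using occupationTime_sub_le (D := D) (t0 := t0) ht

lemma continuous_occupationTime : Continuous (occupationTime D t0) := by
  refine (LipschitzWith.of_le_add fun x z => ?_).continuous
  rw [Real.dist_eq]
  rcases le_total x z with h | h
  · linarith [occupationTime_mono (D := D) (t0 := t0) h, abs_nonneg (x - z)]
  · linarith [occupationTime_sub_le (D := D) (t0 := t0) h, le_abs_self (x - z)]

lemma occupationTime_add_le_of_Ioo_subset (ht : t0 ≤ t) (hts : t ≤ s) (hD : Ioo t s ⊆ D) :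
    occupationTime D t0 t + (s - t) ≤ occupationTime D t0 s := by
  have hsub : (D ∩ Icc t0 t) ∪ Ioo t s ⊆ D ∩ Icc t0 s := by
    rintro u (⟨huD, hu0, hut⟩ | hu)
    · exact ⟨huD, hu0, hut.trans hts⟩
    · exact ⟨hD hu, ht.trans hu.1.le, hu.2.le⟩
  have hdisj : Disjoint (D ∩ Icc t0 t) (Ioo t s) :=
    disjoint_left.2 fun u hu hu' => hu'.1.not_ge hu.2.2
  have := measureReal_mono hsub (volume_inter_Icc_ne_top _ _ _)
  rwa [measureReal_union hdisj measurableSet_Ioo (volume_inter_Icc_ne_top _ _ _)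
    measure_Ioo_lt_top.ne, Real.volume_real_Ioo_of_le hts] at this

lemma occupationTime_eventually_eq {x : ℝ} (hx : t0 ≤ x) (hD : ∀ᶠ z in 𝓝[>] x, z ∈ D) :
    ∀ᶠ z in 𝓝[>] x, occupationTime D t0 z = occupationTime D t0 x + (z - x) := by
  obtain ⟨u, hxu, hu⟩ := mem_nhdsGT_iff_exists_Ioo_subset.1 hD
  filter_upwards [Ioo_mem_nhdsGT hxu] with z hz
  have := occupationTime_add_le_of_Ioo_subset (D := D) hx hz.1.le
    ((Ioo_subset_Ioo_right hz.2.le).trans hu)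
  have := occupationTime_sub_le (D := D) (t0 := t0) hz.1.le
  linarith

end OccupationTime

lemma eventually_mem_iUnion_Ico {ι : Type*} {a b : ι → ℝ} {x : ℝ}
    (hx : x ∈ ⋃ i, Ico (a i) (b i)) : ∀ᶠ z in 𝓝[>] x, z ∈ ⋃ i, Ico (a i) (b i) := by
  obtain ⟨i, hi⟩ := mem_iUnion.1 hx
  filter_upwards [Ioo_mem_nhdsGT hi.2] with z hz
  exact mem_iUnion.2 ⟨i, hi.1.trans hz.1.le, hz.2⟩

noncomputable def switchedLyapunov (D : Set ℝ) (K C t0 : ℝ) (W : ℝ → ℝ) (u : ℝ) : ℝ :=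
  (W u + C * (u - t0 - occupationTime D t0 u)) * exp (-(K * occupationTime D t0 u))

section SwitchedLyapunov

variable {D : Set ℝ} {K C t0 x W' : ℝ} {W : ℝ → ℝ}

lemma switchedLyapunov_slope_of_eventually_mem (hK : 0 ≤ K) (hC : 0 ≤ C) (hx : t0 ≤ x)
    (hW : HasDerivAt W W' x) (hW' : W' ≤ K * W x) (hD : ∀ᶠ z in 𝓝[>] x, z ∈ D) :
    ∀ r > 0, ∀ᶠ z in 𝓝[>] x, slope (switchedLyapunov D K C t0 W) x z < r := by
  set m := occupationTime D t0 x with hm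
  have hl : 0 ≤ C * (x - t0 - m) := mul_nonneg hC (by linarith [occupationTime_le_sub (D := D) hx])
  have hA : HasDerivAt (fun z => -(K * (m + (z - x)))) (-K) x := by
    simpa using ((((hasDerivAt_id x).sub_const x).const_add m).const_mul K).fun_neg
  have hG : HasDerivAt (fun z => (W z + C * (x - t0 - m)) * exp (-(K * (m + (z - x)))))
      ((W' - K * (W x + C * (x - t0 - m))) * exp (-(K * m))) x := by
    refine ((hW.add_const _).fun_mul hA.exp).congr_deriv ?_
    simp only [sub_self, add_zero]
    ring
  refine hG.eventually_slope_lt_of_le ?_ ?_ ?_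
  · exact mul_nonpos_of_nonpos_of_nonneg (by nlinarith) (exp_pos _).le
  · simp [switchedLyapunov, m]
  · filter_upwards [occupationTime_eventually_eq hx hD] with z hz
    refine le_of_eq ?_
    rw [switchedLyapunov, hz, ← hm]
    ring_nf

lemma switchedLyapunov_slope_of_deriv_le_neg (hK : 0 ≤ K) (hC : 0 ≤ C) (hx : t0 ≤ x)
    (hW : HasDerivAt W W' x) (hW' : W' ≤ -C) (hW0 : ∀ᶠ z in 𝓝[>] x, 0 ≤ W z) :
    ∀ r > 0, ∀ᶠ z in 𝓝[>] x, slope (switchedLyapunov D K C t0 W) x z < r := by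
  set m := occupationTime D t0 x
  have hG : HasDerivAt (fun z => (W z + C * (z - t0 - m)) * exp (-(K * m)))
      ((W' + C) * exp (-(K * m))) x := by
    refine ((hW.add ((((hasDerivAt_id x).sub_const t0).sub_const m).const_mul C)).mul_const
      _).congr_deriv ?_
    simp
  refine hG.eventually_slope_lt_of_le ?_ ?_ ?_
  · exact mul_nonpos_of_nonpos_of_nonneg (by linarith) (exp_pos _).le
  · simp [switchedLyapunov, m]
  · filter_upwards [hW0, self_mem_nhdsWithin] with z hWz hxz
    have hmz : m ≤ occupationTime D t0 z := occupationTime_mono (le_of_lt hxz)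
    have hlz := occupationTime_le_sub (D := D) (hx.trans (le_of_lt hxz))
    calc switchedLyapunov D K C t0 W z
        ≤ (W z + C * (z - t0 - occupationTime D t0 z)) * exp (-(K * m)) := by
          unfold switchedLyapunov
          have : 0 ≤ W z + C * (z - t0 - occupationTime D t0 z) :=
            add_nonneg hWz (mul_nonneg hC (by linarith))
          gcongr
      _ ≤ (W z + C * (z - t0 - m)) * exp (-(K * m)) := by gcongr

end SwitchedLyapunov

theorem add_mul_le_mul_exp_occupationTime {D s : Set ℝ} {W : ℝ → ℝ} {K C t0 T : ℝ}
    (hs : s.Countable) (hK : 0 ≤ K) (hC : 0 ≤ C) (hT : t0 ≤ T)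
    (hWc : ContinuousOn W (Icc t0 T)) (hW0 : ∀ u ∈ Icc t0 T, 0 ≤ W u)
    (hW : ∀ x ∈ Ico t0 T \ s, ∃ W', HasDerivAt W W' x ∧
      ((∀ᶠ z in 𝓝[>] x, z ∈ D) ∧ W' ≤ K * W x ∨ W' ≤ -C)) :
    W T + C * (T - t0 - occupationTime D t0 T) ≤ W t0 * exp (K * occupationTime D t0 T) := by
  have hF : ContinuousOn (switchedLyapunov D K C t0 W) (Icc t0 T) := by
    have := continuous_occupationTime (D := D) (t0 := t0)
    unfold switchedLyapunov
    fun_prop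
  have hmono := image_le_of_frequently_slope_lt_off_countable hs hT hF fun x hx r hr => by
    obtain ⟨W', hW', hmode⟩ := hW x hx
    rcases hmode with ⟨hD, hle⟩ | hle
    · exact (switchedLyapunov_slope_of_eventually_mem hK hC hx.1.1 hW' hle hD r hr).frequently
    · refine (switchedLyapunov_slope_of_deriv_le_neg hK hC hx.1.1 hW' hle ?_ r hr).frequently
      filter_upwards [Ioc_mem_nhdsGT hx.1.2] with z hz
      exact hW0 z ⟨hx.1.1.trans hz.1.le, hz.2⟩
  rw [switchedLyapunov, switchedLyapunov, occupationTime_self, exp_neg] at hmono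
  simpa [← div_eq_mul_inv, div_le_iff₀ (exp_pos _)] using hmono

theorem le_mul_exp_of_hasDerivAt_le_mul_off_countable {y : ℝ → ℝ} {a b c : ℝ} {s : Set ℝ}
    (hs : s.Countable) (hab : a ≤ b) (hy : ContinuousOn y (Icc a b))
    (hy' : ∀ x ∈ Ico a b \ s, ∃ y', HasDerivAt y y' x ∧ y' ≤ c * y x) :
    y b ≤ y a * exp (c * (b - a)) := by
  have hg := image_le_of_frequently_slope_lt_off_countable (f := fun u => y u * exp (-(c * u)))
    hs hab (by fun_prop) fun x hx r hr => by
      obtain ⟨y', hy'x, hle⟩ := hy' x hx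
      have hE : HasDerivAt (fun u => exp (-(c * u))) (exp (-(c * x)) * -c) x := by
        simpa using ((hasDerivAt_id x).const_mul c).fun_neg.exp
      refine ((hy'x.fun_mul hE).hasDerivWithinAt (s := Ioi x)).limsup_slope_le' (lt_irrefl x)
        (lt_of_le_of_lt ?_ hr) |>.frequently
      nlinarith [exp_pos (-(c * x))]
  calc y b = y b * exp (-(c * b)) * exp (c * b) := by rw [mul_assoc, ← exp_add]; simp
    _ ≤ y a * exp (-(c * a)) * exp (c * b) := mul_le_mul_of_nonneg_right hg (exp_pos _).le
    _ = y a * exp (c * (b - a)) := by rw [mul_assoc, ← exp_add]; ring_nf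

lemma mul_mul_rpow_sub_one_le_of_le_mul {u d c q : ℝ} (hu : 0 < u) (hq : 0 ≤ q)
    (hd : d ≤ c * u) : d * q * u ^ (q - 1) ≤ c * q * u ^ q := by
  calc d * q * u ^ (q - 1) ≤ c * u * q * u ^ (q - 1) := by gcongr
    _ = c * q * u ^ q := by rw [rpow_sub_one hu.ne']; field_simp

lemma mul_mul_rpow_sub_one_le_of_le_neg_rpow {u d c p : ℝ} (hu : 0 < u) (hp : p ≤ 1)
    (hd : d ≤ -c * u ^ p) : d * (1 - p) * u ^ (1 - p - 1) ≤ -(c * (1 - p)) := by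
  have hq : 0 ≤ 1 - p := sub_nonneg.2 hp
  calc d * (1 - p) * u ^ (1 - p - 1) ≤ -c * u ^ p * (1 - p) * u ^ (1 - p - 1) := by gcongr
    _ = -(c * (1 - p)) * (u ^ p * u ^ (-p)) := by ring_nf
    _ = -(c * (1 - p)) := by rw [← rpow_add hu, add_neg_cancel, rpow_zero, mul_one]

theorem rpow_add_mul_le_mul_exp_occupationTime {y : ℝ → ℝ} {D s : Set ℝ} {c2 c4 p t0 T : ℝ}
    (hs : s.Countable) (hc2 : 0 ≤ c2) (hc4 : 0 ≤ c4) (hp : p ≤ 1) (hT : t0 ≤ T)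
    (hD : ∀ x ∈ D, ∀ᶠ z in 𝓝[>] x, z ∈ D)
    (hy : ContinuousOn y (Icc t0 T)) (hpos : ∀ u ∈ Icc t0 T, 0 < y u)
    (hdiff : ∀ x ∈ Ico t0 T \ s, DifferentiableAt ℝ y x)
    (hoff : ∀ x ∈ Ico t0 T \ s, x ∉ D → deriv y x ≤ -c2 * y x ^ p)
    (hon : ∀ x ∈ Ico t0 T \ s, x ∈ D → deriv y x ≤ c4 * y x) :
    y T ^ (1 - p) + c2 * (1 - p) * (T - t0 - occupationTime D t0 T) ≤
      y t0 ^ (1 - p) * exp (c4 * (1 - p) * occupationTime D t0 T) := by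
  have hq : 0 ≤ 1 - p := sub_nonneg.2 hp
  refine add_mul_le_mul_exp_occupationTime hs (mul_nonneg hc4 hq) (mul_nonneg hc2 hq) hT
    (hy.rpow_const fun _ _ => Or.inr hq) (fun u hu => rpow_nonneg (hpos u hu).le _)
    fun x hx => ?_
  have hyx := hpos x ⟨hx.1.1, hx.1.2.le⟩
  refine ⟨_, (hdiff x hx).hasDerivAt.rpow_const (Or.inl hyx.ne'), ?_⟩
  by_cases hxD : x ∈ D
  · exact Or.inl ⟨hD x hxD, mul_mul_rpow_sub_one_le_of_le_mul hyx hq (hon x hx hxD)⟩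
  · exact Or.inr (mul_mul_rpow_sub_one_le_of_le_neg_rpow hyx hp (hoff x hx hxD))

theorem rpow_le_exp_sub_of_occupationTime_le {y : ℝ → ℝ} {D s : Set ℝ} {c2 c4 p t0 T B : ℝ}
    (hs : s.Countable) (hc2 : 0 ≤ c2) (hc4 : 0 ≤ c4) (hp : p ≤ 1) (hT : t0 ≤ T)
    (hD : ∀ x ∈ D, ∀ᶠ z in 𝓝[>] x, z ∈ D) (hB : occupationTime D t0 T ≤ B)
    (hy : ContinuousOn y (Icc t0 T)) (hpos : ∀ u ∈ Icc t0 T, 0 < y u) (hy0 : y t0 ≤ 1)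
    (hdiff : ∀ x ∈ Ico t0 T \ s, DifferentiableAt ℝ y x)
    (hoff : ∀ x ∈ Ico t0 T \ s, x ∉ D → deriv y x ≤ -c2 * y x ^ p)
    (hon : ∀ x ∈ Ico t0 T \ s, x ∈ D → deriv y x ≤ c4 * y x) :
    y T ^ (1 - p) ≤ exp (c4 * (1 - p) * B) - c2 * (1 - p) * (T - t0 - B) := by
  have hlyap := rpow_add_mul_le_mul_exp_occupationTime hs hc2 hc4 hp hT hD hy hpos hdiff hoff hon
  have hexp : y t0 ^ (1 - p) * exp (c4 * (1 - p) * occupationTime D t0 T) ≤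
      exp (c4 * (1 - p) * B) := by
    calc _ ≤ 1 * exp (c4 * (1 - p) * occupationTime D t0 T) := by
          gcongr
          exact rpow_le_one (hpos t0 ⟨le_rfl, hT⟩).le hy0 (sub_nonneg.2 hp)
      _ ≤ _ := by rw [one_mul]; gcongr
  nlinarith [mul_le_mul_of_nonneg_left hB (mul_nonneg hc2 (sub_nonneg.2 hp))]

theorem stmt_10_general (c2 c4 p pd νd t0 : ℝ) (hc2 : 0 < c2) (hc4 : 0 < c4)
    (hp1 : p < 1)
    (ta tb : ℕ → ℝ)
    (D : Set ℝ) (hD : D = ⋃ k, Ico (ta k) (tb k))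
    (hdur : ∀ t : ℝ, t0 ≤ t → (volume (D ∩ Icc t0 t)).toReal ≤ (t - t0) / pd + νd)
    (y : ℝ → ℝ)
    (hcont : ContinuousOn y (Ici t0))
    (hynn : ∀ t : ℝ, t0 ≤ t → 0 ≤ y t)
    (hy0 : y t0 ≤ 1)
    (hdiff : ∀ t : ℝ, t0 ≤ t → (∀ k, t ≠ ta k ∧ t ≠ tb k) → DifferentiableAt ℝ y t)
    (hoff : ∀ t : ℝ, t0 ≤ t → DifferentiableAt ℝ y t → t ∉ D →
      deriv y t ≤ -c2 * y t ^ p)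
    (hon : ∀ t : ℝ, t0 ≤ t → DifferentiableAt ℝ y t → t ∈ D →
      deriv y t ≤ c4 * y t) :
    (∀ t : ℝ, t0 ≤ t → (∀ s ∈ Icc t0 t, 0 < y s) →
      y t ^ (1 - p) ≤
        Real.exp (c4 * (1 - p) * ((t - t0) / pd + νd))
          - c2 * (1 - p) * (t - t0 - (t - t0) / pd - νd)) ∧
    (∀ ttil : ℝ, t0 ≤ ttil →
      Real.exp (c4 * (1 - p) * ((ttil - t0) / pd + νd))
          - c2 * (1 - p) * (ttil - t0 - (ttil - t0) / pd - νd) ≤ 0 →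
      ∀ t : ℝ, ttil ≤ t → y t = 0) := by
  set s := range ta ∪ range tb
  have hs : s.Countable := (countable_range ta).union (countable_range tb)
  have hdiff' : ∀ x ∈ Ici t0 \ s, DifferentiableAt ℝ y x := fun x hx =>
    hdiff x hx.1 fun k => ⟨fun h => hx.2 (.inl ⟨k, h.symm⟩), fun h => hx.2 (.inr ⟨k, h.symm⟩)⟩
  have hDright : ∀ x ∈ D, ∀ᶠ z in 𝓝[>] x, z ∈ D := hD ▸ fun _ => eventually_mem_iUnion_Ico
  have hpart_i : ∀ t, t0 ≤ t → (∀ s ∈ Icc t0 t, 0 < y s) → y t ^ (1 - p) ≤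
      exp (c4 * (1 - p) * ((t - t0) / pd + νd)) - c2 * (1 - p) * (t - t0 - (t - t0) / pd - νd) :=
    fun t ht hpos => (rpow_le_exp_sub_of_occupationTime_le hs hc2.le hc4.le hp1.le ht hDright
      (hdur t ht) (hcont.mono Icc_subset_Ici_self) hpos hy0
      (fun x hx => hdiff' x ⟨hx.1.1, hx.2⟩) (fun x hx => hoff x hx.1.1 (hdiff' x ⟨hx.1.1, hx.2⟩))
      (fun x hx => hon x hx.1.1 (hdiff' x ⟨hx.1.1, hx.2⟩))).trans_eq (by ring)
  refine ⟨hpart_i, fun ttil httil hrhs t ht => ?_⟩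
  obtain ⟨s0, hs0, hys0⟩ : ∃ s0 ∈ Icc t0 ttil, y s0 = 0 := by
    by_contra! h
    have hpos : ∀ u ∈ Icc t0 ttil, 0 < y u := fun u hu => (hynn u hu.1).lt_of_ne' (h u hu)
    linarith [hpart_i ttil httil hpos, rpow_pos_of_pos (hpos ttil ⟨httil, le_rfl⟩) (1 - p)]
  have hgronwall := le_mul_exp_of_hasDerivAt_le_mul_off_countable hs (hs0.2.trans ht)
    (hcont.mono fun u hu => hs0.1.trans hu.1) fun x hx => by
      have hx0 : t0 ≤ x := hs0.1.trans hx.1.1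
      have hdx := hdiff' x ⟨hx0, hx.2⟩
      refine ⟨deriv y x, hdx.hasDerivAt, ?_⟩
      by_cases hxD : x ∈ D
      · exact hon x hx0 hdx hxD
      · nlinarith [hoff x hx0 hdx hxD, rpow_nonneg (hynn x hx0) p, hynn x hx0]
  rw [hys0, zero_mul] at hgronwall
  exact le_antisymm hgronwall (hynn t (httil.trans ht))

theorem stmt_10 (c2 c4 p pd νd t0 : ℝ) (hc2 : 0 < c2) (hc4 : 0 < c4)
    (hp0 : 0 < p) (hp1 : p < 1) (hpd : 1 < pd) (hνd : 0 < νd) (ht0 : 0 ≤ t0)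
    (ta tb : ℕ → ℝ) (hta : ∀ k, t0 ≤ ta k) (hord : ∀ k, ta k ≤ tb k)
    (hdisj : ∀ k l, k ≠ l → Disjoint (Ico (ta k) (tb k)) (Ico (ta l) (tb l)))
    (D : Set ℝ) (hD : D = ⋃ k, Ico (ta k) (tb k))
    (hdur : ∀ t : ℝ, t0 ≤ t → (volume (D ∩ Icc t0 t)).toReal ≤ (t - t0) / pd + νd)
    (y : ℝ → ℝ)
    (hcont : ContinuousOn y (Ici t0))
    (hynn : ∀ t : ℝ, t0 ≤ t → 0 ≤ y t)
    (hy0 : y t0 ≤ 1)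
    (hdiff : ∀ t : ℝ, t0 ≤ t → (∀ k, t ≠ ta k ∧ t ≠ tb k) → DifferentiableAt ℝ y t)
    (hoff : ∀ t : ℝ, t0 ≤ t → DifferentiableAt ℝ y t → t ∉ D →
      deriv y t ≤ -c2 * y t ^ p)
    (hon : ∀ t : ℝ, t0 ≤ t → DifferentiableAt ℝ y t → t ∈ D →
      deriv y t ≤ c4 * y t) :
    (∀ t : ℝ, t0 ≤ t → (∀ s ∈ Icc t0 t, 0 < y s) →
      y t ^ (1 - p) ≤
        Real.exp (c4 * (1 - p) * ((t - t0) / pd + νd))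
          - c2 * (1 - p) * (t - t0 - (t - t0) / pd - νd)) ∧
    (∀ ttil : ℝ, t0 ≤ ttil →
      Real.exp (c4 * (1 - p) * ((ttil - t0) / pd + νd))
          - c2 * (1 - p) * (ttil - t0 - (ttil - t0) / pd - νd) ≤ 0 →
      ∀ t : ℝ, ttil ≤ t → y t = 0) :=
  stmt_10_general c2 c4 p pd νd t0 hc2 hc4 hp1 ta tb D hD hdur y hcont hynn hy0 hdiff hoff hon
end

section
/- Let N, q ≥ 1 be integers, let a < b be positive odd integers, let a_{ij} ≥ 0 (1 ≤ i, j ≤ N) be symmetric weights (a_{ij} = a_{ji}), let d_i ≥ 0 (1 ≤ i ≤ N), and let x_1, …, x_N ∈ ℝ^q. Define ā_{ij} = a_{ij}^{2b/(a+b)}, d̄_i = d_i^{2b/(a+b)}, and Q̄(x) = (1/2)·∑_{i,j=1}^N ā_{ij}·‖x_i − x_j‖² + ∑_{i=1}^N d̄_i·‖x_i‖². Then ∑_{i=1}^N ⟨x_i, ∑_{j=1}^N a_{ij}·(x_i − x_j)^{a/b} + d_i·x_i^{a/b}⟩ ≥ (1/2)·(2·Q̄(x))^{(a+b)/(2b)}.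 -/
/-!
Pairing the coupling term with `x` and symmetrizing via `a_{ij} = a_{ji}` turns the left side into
`½ ∑ a_{ij} ∑_k |x_{ik} - x_{jk}|^{2p} + ∑ d_i ∑_k |x_{ik}|^{2p}` with `p = (a+b)/(2b) ∈ (0, 1]`.
Since `t ↦ t^p` is subadditive on `[0, ∞)` and `(a_{ij}^{1/p})^p = a_{ij}`, the `p`-th power of
`∑ ā_{ij} ‖x_i - x_j‖² = ∑ ā_{ij} ∑_k (x_{ik} - x_{jk})²` is bounded termwise by the first sum, and
similarly for the pinning term, the factor `2^p ≤ 2` being absorbed.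
-/

open Finset

/-- Signed power: `spow s r = sign s * |s| ^ r`, the real-valued odd-rational power. -/
noncomputable def spow (s r : ℝ) : ℝ := Real.sign s * |s| ^ r

lemma spow_neg (s r : ℝ) : spow (-s) r = -spow s r := by
  simp [spow, Real.sign_neg]

lemma mul_spow_self {r : ℝ} (hr : 1 + r ≠ 0) (s : ℝ) : s * spow s r = |s| ^ (1 + r) := by
  rcases lt_trichotomy s 0 with hs | rfl | hs
  · rw [spow, Real.sign_of_neg hs, Real.rpow_add (abs_pos.mpr hs.ne), Real.rpow_one,
      abs_of_neg hs]
    ring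
  · simp [spow, Real.zero_rpow hr]
  · rw [spow, Real.sign_of_pos hs, abs_of_pos hs, Real.rpow_add hs, Real.rpow_one]
    ring

section Symmetrization

variable {ι : Type*} [Fintype ι] {A : ι → ι → ℝ} {r : ℝ}

lemma sum_mul_sum_spow_sub (hA : ∀ i j, A i j = A j i) (hr : 1 + r ≠ 0) (y : ι → ℝ) :
    ∑ i, y i * ∑ j, A i j * spow (y i - y j) r =
      (1 / 2) * ∑ i, ∑ j, A i j * |y i - y j| ^ (1 + r) := by
  set S := ∑ i, y i * ∑ j, A i j * spow (y i - y j) r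
  have hswap : S = ∑ i, ∑ j, A i j * (-y j * spow (y i - y j) r) := by
    simp only [S, mul_sum]
    rw [sum_comm]
    refine sum_congr rfl fun i _ => sum_congr rfl fun j _ => ?_
    rw [hA j i, ← neg_sub, spow_neg]
    ring
  have h2S : 2 * S = ∑ i, ∑ j, A i j * |y i - y j| ^ (1 + r) := by
    rw [two_mul]
    nth_rewrite 2 [hswap]
    simp only [S, mul_sum, ← sum_add_distrib]
    refine sum_congr rfl fun i _ => sum_congr rfl fun j _ => ?_
    rw [← mul_spow_self hr]
    ring
  linarith

lemma sum_mul_laplacian_spow (hA : ∀ i j, A i j = A j i) (hr : 1 + r ≠ 0) (d y : ι → ℝ) :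
    ∑ i, y i * ((∑ j, A i j * spow (y i - y j) r) + d i * spow (y i) r) =
      (1 / 2) * ∑ i, ∑ j, A i j * |y i - y j| ^ (1 + r) + ∑ i, d i * |y i| ^ (1 + r) := by
  simp only [mul_add, sum_add_distrib, sum_mul_sum_spow_sub hA hr, mul_left_comm (y _) (d _),
    mul_spow_self hr]

lemma sum_sum_mul_laplacian_spow {κ : Type*} [Fintype κ] (hA : ∀ i j, A i j = A j i)
    (hr : 1 + r ≠ 0) (d : ι → ℝ) (x : ι → κ → ℝ) :
    ∑ i, ∑ k, x i k * ((∑ j, A i j * spow (x i k - x j k) r) + d i * spow (x i k) r) =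
      (1 / 2) * ∑ i, ∑ j, A i j * ∑ k, |x i k - x j k| ^ (1 + r) +
        ∑ i, d i * ∑ k, |x i k| ^ (1 + r) := by
  rw [sum_comm]
  simp only [sum_mul_laplacian_spow hA hr, sum_add_distrib, mul_sum]
  congr 2
  · rw [sum_comm]
    exact sum_congr rfl fun i _ => sum_comm
  · exact sum_comm

end Symmetrization

section Subadditivity

variable {p : ℝ}

lemma rpow_sum_le_sum_rpow {ι : Type*} (s : Finset ι) {f : ι → ℝ} (hf : ∀ i ∈ s, 0 ≤ f i)
    (hp0 : 0 < p) (hp1 : p ≤ 1) : (∑ i ∈ s, f i) ^ p ≤ ∑ i ∈ s, f i ^ p :=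
  le_sum_of_subadditive_on_pred (· ^ p) (0 ≤ ·) (Real.zero_rpow hp0.ne').le
    (fun _ _ hx hy => Real.rpow_add_le_add_rpow hx hy hp0.le hp1) (fun _ _ => add_nonneg) f hf

lemma rpow_sum_sq_le_sum_abs_rpow {κ : Type*} [Fintype κ] (hp0 : 0 < p) (hp1 : p ≤ 1)
    (v : κ → ℝ) : (∑ k, v k ^ 2) ^ p ≤ ∑ k, |v k| ^ (2 * p) := by
  refine (rpow_sum_le_sum_rpow _ (fun k _ => sq_nonneg (v k)) hp0 hp1).trans_eq ?_
  refine sum_congr rfl fun k _ => ?_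
  rw [← sq_abs, ← Real.rpow_natCast, ← Real.rpow_mul (abs_nonneg _), Nat.cast_ofNat]

lemma rpow_sum_rpow_mul_sum_sq_le {ι κ : Type*} [Fintype ι] [Fintype κ] {w : ι → ℝ}
    (hw : ∀ i, 0 ≤ w i) {e : ℝ} (hep : e * p = 1) (hp0 : 0 < p) (hp1 : p ≤ 1)
    (v : ι → κ → ℝ) :
    (∑ i, w i ^ e * ∑ k, v i k ^ 2) ^ p ≤ ∑ i, w i * ∑ k, |v i k| ^ (2 * p) := by
  have hsq (i : ι) : 0 ≤ ∑ k, v i k ^ 2 := sum_nonneg fun k _ => sq_nonneg _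
  calc (∑ i, w i ^ e * ∑ k, v i k ^ 2) ^ p
      ≤ ∑ i, (w i ^ e * ∑ k, v i k ^ 2) ^ p :=
        rpow_sum_le_sum_rpow _ (fun i _ => mul_nonneg (Real.rpow_nonneg (hw i) e) (hsq i)) hp0 hp1
    _ = ∑ i, w i * (∑ k, v i k ^ 2) ^ p := by
        refine sum_congr rfl fun i _ => ?_
        rw [Real.mul_rpow (Real.rpow_nonneg (hw i) e) (hsq i), ← Real.rpow_mul (hw i), hep,
          Real.rpow_one]
    _ ≤ ∑ i, w i * ∑ k, |v i k| ^ (2 * p) :=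
        sum_le_sum fun i _ => mul_le_mul_of_nonneg_left (rpow_sum_sq_le_sum_abs_rpow hp0 hp1 _) (hw i)

lemma rpow_add_two_mul_le {G D : ℝ} (hG : 0 ≤ G) (hD : 0 ≤ D) (hp0 : 0 ≤ p) (hp1 : p ≤ 1) :
    (G + 2 * D) ^ p ≤ G ^ p + 2 * D ^ p := by
  have htwo : (2 : ℝ) ^ p ≤ 2 := by
    simpa using Real.rpow_le_rpow_of_exponent_le one_le_two hp1
  calc (G + 2 * D) ^ p ≤ G ^ p + 2 ^ p * D ^ p := by
        rw [← Real.mul_rpow zero_le_two hD]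
        exact Real.rpow_add_le_add_rpow hG (by positivity) hp0 hp1
    _ ≤ G ^ p + 2 * D ^ p := by gcongr

end Subadditivity

theorem stmt_12_general (N q a b : ℕ) (hab : a < b)
    (A : Fin N → Fin N → ℝ) (hA : ∀ i j, 0 ≤ A i j) (hAs : ∀ i j, A i j = A j i)
    (d : Fin N → ℝ) (hd : ∀ i, 0 ≤ d i)
    (x : Fin N → Fin q → ℝ) :
    ∑ i, ∑ k, x i k *
        ((∑ j, A i j * spow (x i k - x j k) ((a : ℝ) / b)) +
          d i * spow (x i k) ((a : ℝ) / b)) ≥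
      (1 / 2) *
        (2 * ((1 / 2) * (∑ i, ∑ j,
            A i j ^ (2 * (b : ℝ) / ((a : ℝ) + b)) * (∑ k, (x i k - x j k) ^ 2)) +
          ∑ i, d i ^ (2 * (b : ℝ) / ((a : ℝ) + b)) * (∑ k, (x i k) ^ 2))) ^
          (((a : ℝ) + b) / (2 * b)) := by
  set p : ℝ := ((a : ℝ) + b) / (2 * b)
  have hb : (0 : ℝ) < b := by exact_mod_cast (Nat.zero_le a).trans_lt hab
  have hp0 : 0 < p := by positivity
  have hp1 : p ≤ 1 := by
    rw [div_le_one (by positivity)]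
    linarith [show (a : ℝ) < b by exact_mod_cast hab]
  have hep : 2 * (b : ℝ) / (a + b) * p = 1 := by simp only [p]; field_simp
  have hr : 1 + (a : ℝ) / b = 2 * p := by simp only [p]; field_simp; ring
  rw [ge_iff_le, sum_sum_mul_laplacian_spow hAs (by positivity) d x, hr]
  have hG := rpow_sum_rpow_mul_sum_sq_le (fun ij : Fin N × Fin N => hA ij.1 ij.2) hep hp0 hp1
    fun ij k => x ij.1 k - x ij.2 k
  have hD := rpow_sum_rpow_mul_sum_sq_le hd hep hp0 hp1 x
  simp only [Fintype.sum_prod_type] at hG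
  set G := ∑ i, ∑ j, A i j ^ (2 * (b : ℝ) / (a + b)) * ∑ k, (x i k - x j k) ^ 2
  set D := ∑ i, d i ^ (2 * (b : ℝ) / (a + b)) * ∑ k, x i k ^ 2
  have hG0 : 0 ≤ G := sum_nonneg fun i _ => sum_nonneg fun j _ =>
    mul_nonneg (Real.rpow_nonneg (hA i j) _) (sum_nonneg fun k _ => sq_nonneg _)
  have hD0 : 0 ≤ D := sum_nonneg fun i _ =>
    mul_nonneg (Real.rpow_nonneg (hd i) _) (sum_nonneg fun k _ => sq_nonneg _)
  have hsum := rpow_add_two_mul_le hG0 hD0 hp0.le hp1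
  rw [show 2 * (1 / 2 * G + D) = G + 2 * D by ring]
  linarith

theorem stmt_12 (N q a b : ℕ) (hN : 1 ≤ N) (hq : 1 ≤ q)
    (ha : Odd a) (hb : Odd b) (ha0 : 0 < a) (hab : a < b)
    (A : Fin N → Fin N → ℝ) (hA : ∀ i j, 0 ≤ A i j) (hAs : ∀ i j, A i j = A j i)
    (d : Fin N → ℝ) (hd : ∀ i, 0 ≤ d i)
    (x : Fin N → Fin q → ℝ) :
    ∑ i, ∑ k, x i k *
        ((∑ j, A i j * spow (x i k - x j k) ((a : ℝ) / b)) +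
          d i * spow (x i k) ((a : ℝ) / b)) ≥
      (1 / 2) *
        (2 * ((1 / 2) * (∑ i, ∑ j,
            A i j ^ (2 * (b : ℝ) / ((a : ℝ) + b)) * (∑ k, (x i k - x j k) ^ 2)) +
          ∑ i, d i ^ (2 * (b : ℝ) / ((a : ℝ) + b)) * (∑ k, (x i k) ^ 2))) ^
          (((a : ℝ) + b) / (2 * b)) :=
  stmt_12_general N q a b hab A hA hAs d hd x
end
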